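/- Let E be the Banach algebra of continuous ℂ-linear endomorphisms of the space of n×n complex matrices, let 𝓛 : ℝ → E be continuous, λ ∈ ℝ, t_0 ∈ ℝ. Define D_0(t) := 1 and recursively D_k(t) := ∫_{t_0}^{t} 𝓛(s)∘D_{k−1}(s) ds for k ≥ 1 (equivalently, D_k(t) is the time-ordered iterated integral ∫_{t_0}^{t} dt_1 ⋯ ∫_{t_0}^{t_{k−1}} dt_k 𝓛(t_1)∘⋯∘𝓛(t_k)). Then for every t the series Σ_{k=0}^{∞} λ^k D_k(t) is summable in E, and U(t) := Σ_{k=0}^{∞} λ^k D_k(t) satisfies U(t_0) = 1 and, for every t, U has derivative λ·𝓛(t)∘U(t) at t. -/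

import Mathlib

open MeasureTheory

attribute [local instance] Matrix.linftyOpNormedAddCommGroup Matrix.linftyOpNormedSpace

noncomputable instance stmt6CLMNormedAddCommGroup (n : ℕ) :
    NormedAddCommGroup (Matrix (Fin n) (Fin n) ℂ →L[ℂ] Matrix (Fin n) (Fin n) ℂ) :=
  ContinuousLinearMap.toNormedAddCommGroup

noncomputable instance stmt6CLMNormedSpace (n : ℕ) :
    NormedSpace ℂ (Matrix (Fin n) (Fin n) ℂ →L[ℂ] Matrix (Fin n) (Fin n) ℂ) :=
  ContinuousLinearMap.toNormedSpace

noncomputable instance stmt6CLMNormedSpaceReal (n : ℕ) :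
    NormedSpace ℝ (Matrix (Fin n) (Fin n) ℂ →L[ℂ] Matrix (Fin n) (Fin n) ℂ) :=
  ContinuousLinearMap.toNormedSpace

instance stmt6CLMContinuousSMulReal (n : ℕ) :
    ContinuousSMul ℝ (Matrix (Fin n) (Fin n) ℂ →L[ℂ] Matrix (Fin n) (Fin n) ℂ) :=
  @IsBoundedSMul.continuousSMul _ _ _ _ _ _ _
    (NormedSpace.toIsBoundedSMul (E := (Matrix (Fin n) (Fin n) ℂ →L[ℂ] Matrix (Fin n) (Fin n) ℂ)))

/-! Each `D (k + 1)` is the primitive of `𝓛 · D k` vanishing at `t₀`, and by induction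
`‖D k t‖ ≤ ‖D 0‖ (M |t - t₀|)ᵏ / k!` whenever `M` bounds `‖𝓛‖` between `t₀` and `t`.
Hence both the series `∑ D k` and its termwise derivative `∑ 𝓛 · D k` converge locally
uniformly, so the sum solves `U' = 𝓛 U`. The coupling `λ` is absorbed by passing from
`(𝓛, D k)` to `(λ 𝓛, λᵏ D k)`, which satisfies the same recursion. -/

open Set intervalIntegral
open scoped Nat Interval

section DysonSeries

variable {A : Type*} [NormedRing A] [NormedSpace ℝ A] {L : ℝ → A} {D : ℕ → ℝ → A} {t₀ : ℝ}
  {c : A}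

variable (L t₀ c) in
noncomputable def dysonTerm : ℕ → ℝ → A
  | 0, _ => c
  | k + 1, t => ∫ s in t₀..t, L s * dysonTerm k s

theorem eq_dysonTerm (hD0 : ∀ t, D 0 t = c)
    (hD : ∀ k t, D (k + 1) t = ∫ s in t₀..t, L s * D k s) : D = dysonTerm L t₀ c := by
  funext k t
  induction k generalizing t with
  | zero => exact hD0 t
  | succ k ih => simp only [hD, ih, dysonTerm]

theorem dysonTerm_zero (t : ℝ) : dysonTerm L t₀ c 0 t = c := rfl

theorem dysonTerm_succ (k : ℕ) (t : ℝ) :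
    dysonTerm L t₀ c (k + 1) t = ∫ s in t₀..t, L s * dysonTerm L t₀ c k s := rfl

theorem dysonTerm_succ_self (k : ℕ) : dysonTerm L t₀ c (k + 1) t₀ = 0 := by
  simp [dysonTerm_succ]

theorem tsum_dysonTerm_self : ∑' k, dysonTerm L t₀ c k t₀ = c := by
  rw [tsum_eq_single 0 fun k hk => ?_, dysonTerm_zero]
  obtain ⟨k, rfl⟩ := Nat.exists_eq_succ_of_ne_zero hk
  exact dysonTerm_succ_self k

theorem smul_dysonTerm [IsScalarTower ℝ A A] [SMulCommClass ℝ A A] (r : ℝ) (k : ℕ) (t : ℝ) :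
    r ^ k • dysonTerm L t₀ c k t = dysonTerm (fun s => r • L s) t₀ c k t := by
  induction k generalizing t with
  | zero => rw [pow_zero, one_smul, dysonTerm_zero, dysonTerm_zero]
  | succ k ih =>
    simp_rw [dysonTerm_succ, ← ih, ← intervalIntegral.integral_smul, smul_mul_smul_comm,
      pow_succ']

theorem norm_dysonTerm_le {M : ℝ} (k : ℕ) {t : ℝ} (hM : ∀ s ∈ uIcc t₀ t, ‖L s‖ ≤ M) :
    ‖dysonTerm L t₀ c k t‖ ≤ ‖c‖ * ((M * |t - t₀|) ^ k / k !) := by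
  induction k generalizing t with
  | zero => simp [dysonTerm_zero]
  | succ k ih =>
    have hM0 : 0 ≤ M := (norm_nonneg _).trans (hM t₀ left_mem_uIcc)
    have hbound : ∀ s ∈ Ι t₀ t,
        ‖L s * dysonTerm L t₀ c k s‖ ≤ ‖c‖ * M ^ (k + 1) / k ! * |s - t₀| ^ k := by
      intro s hs
      have hsub : uIcc t₀ s ⊆ uIcc t₀ t := uIcc_subset_uIcc_left (uIoc_subset_uIcc hs)
      calc ‖L s * dysonTerm L t₀ c k s‖ ≤ ‖L s‖ * ‖dysonTerm L t₀ c k s‖ := norm_mul_le _ _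
        _ ≤ M * (‖c‖ * ((M * |s - t₀|) ^ k / k !)) :=
          mul_le_mul (hM s (uIoc_subset_uIcc hs)) (ih fun r hr => hM r (hsub hr))
            (norm_nonneg _) hM0
        _ = ‖c‖ * M ^ (k + 1) / k ! * |s - t₀| ^ k := by ring
    calc ‖dysonTerm L t₀ c (k + 1) t‖ = ‖∫ s in Ι t₀ t, L s * dysonTerm L t₀ c k s‖ := by
          rw [dysonTerm_succ, norm_intervalIntegral_eq]
      _ ≤ ∫ s in Ι t₀ t, ‖c‖ * M ^ (k + 1) / k ! * |s - t₀| ^ k :=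
          MeasureTheory.norm_integral_le_of_norm_le
            (Continuous.integrableOn_uIoc (by fun_prop))
            ((MeasureTheory.ae_restrict_mem measurableSet_uIoc).mono hbound)
      _ = ‖c‖ * ((M * |t - t₀|) ^ (k + 1) / (k + 1)!) := by
          rw [MeasureTheory.integral_const_mul, integral_pow_abs_sub_uIoc, Nat.factorial_succ,
            Nat.cast_mul, Nat.cast_succ]
          field_simp
          ring

variable [CompleteSpace A]

theorem continuous_dysonTerm (hL : Continuous L) (k : ℕ) : Continuous (dysonTerm L t₀ c k) := by
  induction k with
  | zero => exact continuous_const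
  | succ k ih =>
    exact continuous_iff_continuousAt.2 fun t =>
      ((hL.mul ih).integral_hasStrictDerivAt t₀ t).hasDerivAt.continuousAt

theorem hasDerivAt_dysonTerm_succ (hL : Continuous L) (k : ℕ) (t : ℝ) :
    HasDerivAt (dysonTerm L t₀ c (k + 1)) (L t * dysonTerm L t₀ c k t) t :=
  ((hL.mul (continuous_dysonTerm hL k)).integral_hasStrictDerivAt t₀ t).hasDerivAt

theorem summable_dysonTerm (hL : Continuous L) (t : ℝ) :
    Summable fun k => dysonTerm L t₀ c k t := by
  obtain ⟨M, hM⟩ :=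
    (isCompact_uIcc (a := t₀) (b := t)).exists_bound_of_continuousOn hL.continuousOn
  exact .of_norm_bounded ((Real.summable_pow_div_factorial (M * |t - t₀|)).mul_left ‖c‖)
    fun k => norm_dysonTerm_le k hM

theorem hasDerivAt_tsum_dysonTerm (hL : Continuous L) (t : ℝ) :
    HasDerivAt (fun u => ∑' k, dysonTerm L t₀ c k u) (L t * ∑' k, dysonTerm L t₀ c k t) t := by
  set R := |t - t₀| + 1
  have hR : 0 < R := by positivity
  obtain ⟨M, hM⟩ := (isCompact_Icc (a := t₀ - R) (b := t₀ + R)).exists_bound_of_continuousOn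
    hL.continuousOn
  have hM0 : 0 ≤ M := (norm_nonneg _).trans (hM t₀ ⟨by linarith, by linarith⟩)
  have hbound : ∀ k, ∀ y ∈ Ioo (t₀ - R) (t₀ + R),
      ‖L y * dysonTerm L t₀ c k y‖ ≤ M * (‖c‖ * ((M * R) ^ k / k !)) := by
    intro k y hy
    have hyR : |y - t₀| ≤ R := abs_sub_le_iff.2 ⟨by linarith [hy.2], by linarith [hy.1]⟩
    have hsub : uIcc t₀ y ⊆ Icc (t₀ - R) (t₀ + R) :=
      uIcc_subset_Icc ⟨by linarith, by linarith⟩ (Ioo_subset_Icc_self hy)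
    calc ‖L y * dysonTerm L t₀ c k y‖ ≤ ‖L y‖ * ‖dysonTerm L t₀ c k y‖ := norm_mul_le _ _
      _ ≤ M * (‖c‖ * ((M * |y - t₀|) ^ k / k !)) :=
        mul_le_mul (hM y (hsub right_mem_uIcc)) (norm_dysonTerm_le k fun s hs => hM s (hsub hs))
          (norm_nonneg _) hM0
      _ ≤ M * (‖c‖ * ((M * R) ^ k / k !)) := by gcongr
  have hmem : t ∈ Ioo (t₀ - R) (t₀ + R) :=
    ⟨by linarith [neg_abs_le (t - t₀)], by linarith [le_abs_self (t - t₀)]⟩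
  have htail : HasDerivAt (fun u => ∑' k, dysonTerm L t₀ c (k + 1) u)
      (∑' k, L t * dysonTerm L t₀ c k t) t :=
    hasDerivAt_tsum_of_isPreconnected
      (((Real.summable_pow_div_factorial (M * R)).mul_left ‖c‖).mul_left M) isOpen_Ioo
      isPreconnected_Ioo (fun k y _ => hasDerivAt_dysonTerm_succ hL k y) hbound
      (y₀ := t₀) ⟨by linarith, by linarith⟩ ((summable_nat_add_iff 1).2 (summable_dysonTerm hL t₀))
      hmem
  have hsplit : (fun u => ∑' k, dysonTerm L t₀ c k u) =
      fun u => c + ∑' k, dysonTerm L t₀ c (k + 1) u :=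
    funext fun u => by rw [(summable_dysonTerm hL u).tsum_eq_zero_add, dysonTerm_zero]
  rw [hsplit, ← (summable_dysonTerm hL t).tsum_mul_left]
  exact htail.const_add c

theorem dysonSeries_spec [IsScalarTower ℝ A A] [SMulCommClass ℝ A A] (hL : Continuous L)
    (hD0 : ∀ t, D 0 t = c) (hD : ∀ k t, D (k + 1) t = ∫ s in t₀..t, L s * D k s) (r : ℝ) :
    (∀ t, Summable fun k => r ^ k • D k t) ∧ ∑' k, r ^ k • D k t₀ = c ∧
      ∀ t, HasDerivAt (fun u => ∑' k, r ^ k • D k u) (r • (L t * ∑' k, r ^ k • D k t)) t := by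
  obtain rfl := eq_dysonTerm hD0 hD
  have hrL : Continuous fun s => r • L s := hL.const_smul r
  simp only [smul_dysonTerm, ← smul_mul_assoc]
  exact ⟨summable_dysonTerm hrL, tsum_dysonTerm_self, hasDerivAt_tsum_dysonTerm hrL⟩

end DysonSeries

/-- the Dyson series.  With `D_0(t) = 1` and
`D_k(t) = ∫_{t_0}^t 𝓛(s) D_{k-1}(s) ds`, the series `Σ_k λ^k D_k(t)` is summable and
`U(t) = Σ_k λ^k D_k(t)` satisfies `U(t_0) = 1` and `U' = λ 𝓛(t) U(t)`. -/
theorem stmt6 (n : ℕ)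
    (𝓛 : ℝ → (Matrix (Fin n) (Fin n) ℂ →L[ℂ] Matrix (Fin n) (Fin n) ℂ))
    (hcont : Continuous 𝓛) (lam : ℝ) (t₀ : ℝ)
    (D : ℕ → ℝ → (Matrix (Fin n) (Fin n) ℂ →L[ℂ] Matrix (Fin n) (Fin n) ℂ))
    (hD0 : ∀ t, D 0 t = 1)
    (hDk : ∀ k t, D (k + 1) t = ∫ s in t₀..t, 𝓛 s * D k s) :
    (∀ t, Summable (fun k : ℕ => lam ^ k • D k t)) ∧
      (∑' k : ℕ, lam ^ k • D k t₀) = 1 ∧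
      ∀ t, HasDerivAt (fun u => ∑' k : ℕ, lam ^ k • D k u)
        (lam • (𝓛 t * ∑' k : ℕ, lam ^ k • D k t)) t := by
  -- Instance search does not find the operator-norm ring structure on this type (its topology
  -- is built over the product topology of `Matrix`), so the instances are supplied by hand.
  refine @dysonSeries_spec _ ContinuousLinearMap.toNormedRing (stmt6CLMNormedSpaceReal n) 𝓛 D t₀ 1
    ?_ ?_ ?_ hcont hD0 hDk lam
  · have : SequentialSpace (Matrix (Fin n) (Fin n) ℂ) :=
      inferInstanceAs (SequentialSpace (Fin n → Fin n → ℂ))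
    exact ContinuousLinearMap.instCompleteSpace
  · exact ⟨fun r f g => ContinuousLinearMap.smul_comp r f g⟩
  · exact ⟨fun r f g => (ContinuousLinearMap.comp_smul f r g).symm⟩
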